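/- There is no integer t such that every finite simple graph G with Δ₂(G) ≥ t satisfies χ(G) ≤ max{ω(G), Δ₂(G)}; that is, for every t there exists a finite simple graph G with Δ₂(G) ≥ t and χ(G) > max{ω(G), Δ₂(G)}. -/

import Mathlib

open SimpleGraph Classical

/-- Chromatic number as a natural number. -/
noncomputable def chromNum {V : Type*} [Fintype V] (G : SimpleGraph V) : ℕ :=
  sInf {n | G.Colorable n}

/-- Degree of a vertex. -/
noncomputable def deg {V : Type*} [Fintype V] (G : SimpleGraph V) (v : V) : ℕ :=
  (G.neighborSet v).ncard

/-- Maximum degree. -/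
noncomputable def maxDeg {V : Type*} [Fintype V] (G : SimpleGraph V) : ℕ :=
  sSup {d | ∃ v, d = deg G v}

/-- Δ₂ : max over edges of the min of the endpoint degrees. -/
noncomputable def delta2 {V : Type*} [Fintype V] (G : SimpleGraph V) : ℕ :=
  sSup {d | ∃ u v, G.Adj u v ∧ d = min (deg G u) (deg G v)}

/-- Ore degree. -/
noncomputable def theta {V : Type*} [Fintype V] (G : SimpleGraph V) : ℕ :=
  sSup {d | ∃ u v, G.Adj u v ∧ d = deg G u + deg G v}

/-- Vertex-critical graph. -/
noncomputable def critical {V : Type*} [Fintype V] (G : SimpleGraph V) : Prop :=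
  ∀ v : V, chromNum (G.induce {u | u ≠ v}) < chromNum G

noncomputable def deltaEps {V : Type*} [Fintype V] (ε : ℝ) (G : SimpleGraph V) : ℕ :=
  ⌊sSup {x : ℝ | ∃ u v, G.Adj u v ∧
      x = (1 - ε) * (min (deg G u) (deg G v) : ℕ) + ε * (max (deg G u) (deg G v) : ℕ)}⌋₊

def FnRel (n : ℕ) : Fin n ⊕ Fin (n - 1) → Fin n ⊕ Fin (n - 1) → Prop
  | Sum.inl i, Sum.inl j => ¬((i : ℕ) = 0 ∧ (j : ℕ) = 1) ∧ ¬((i : ℕ) = 1 ∧ (j : ℕ) = 0)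
  | Sum.inr _, Sum.inr _ => True
  | Sum.inl i, Sum.inr a => ((i : ℕ) = 0 ∧ (a : ℕ) < (n - 1) / 2) ∨ ((i : ℕ) = 1 ∧ (n - 1) / 2 ≤ (a : ℕ))
  | Sum.inr _, Sum.inl _ => False

def Fn (n : ℕ) : SimpleGraph (Fin n ⊕ Fin (n - 1)) := SimpleGraph.fromRel (FnRel n)

/-!
The vertices `x = inl 0` and `y = inl 1` of `F_n` are not adjacent, and every other vertex has
degree `n - 1`, so `Δ₂(F_n) = n - 1`. A clique through a vertex `v ∉ {x, y}` lies in the closed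
neighbourhood of `v`, which has `n` vertices but is not a clique, so `ω(F_n) ≤ n - 1`. In an
`(n - 1)`-colouring, the `(n - 1)`-clique obtained by deleting `x` from `K_n - xy` uses every
colour, so some vertex of it shares the colour of `x`, and the only candidate is `y`; the clique
`K_{n-1}` also uses this colour, on a vertex adjacent to `x` or `y`.
Hence `χ(F_n) ≥ n`. All three invariants are isomorphism invariants, so `F_n` may be relabelled
over `Fin (2n - 1)`.
-/

section Invariants

variable {V : Type*} {G : SimpleGraph V}

lemma cliqueNum_le_of_forall_isClique {k : ℕ}
    (h : ∀ s : Set V, G.IsClique s → s.ncard ≤ k) : G.cliqueNum ≤ k := by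
  obtain ⟨s, hs⟩ := G.exists_isNClique_cliqueNum
  rw [← hs.card_eq, ← Set.ncard_coe_finset]
  exact h _ hs.isClique

lemma cliqueNum_le_of_embedding {W : Type*} [Finite W] {G' : SimpleGraph W} (f : G ↪g G') :
    G.cliqueNum ≤ G'.cliqueNum := by
  obtain ⟨s, hs⟩ := G.exists_isNClique_cliqueNum
  have hclique : G'.IsClique (s.map f.toEmbedding : Set W) := by
    rw [Finset.coe_map]
    exact (f.injective.injOn.pairwise_image).2 (hs.isClique.mono' fun _ _ h ↦ f.map_adj_iff.2 h)
  calc G.cliqueNum = (s.map f.toEmbedding).card := by rw [Finset.card_map, hs.card_eq]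
    _ ≤ G'.cliqueNum := IsClique.card_le_cliqueNum (tc := hclique)

lemma SimpleGraph.Coloring.exists_mem_eq_of_isClique {α : Type*} [Finite α] (C : G.Coloring α)
    {s : Set V} (hs : G.IsClique s) (hcard : Nat.card α ≤ s.ncard) (c : α) :
    ∃ v ∈ s, C v = c := by
  have hinj : Set.InjOn C s := fun u hu v hv huv ↦ by
    by_contra hne
    exact C.valid (hs hu hv hne) huv
  have himage : C '' s = Set.univ :=
    Set.eq_of_subset_of_ncard_le (Set.subset_univ _) (by rwa [Set.ncard_univ, hinj.ncard_image])
  exact (himage ▸ Set.mem_univ c : c ∈ C '' s)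

variable [Fintype V]

lemma deg_le_card (v : V) : deg G v ≤ Fintype.card V :=
  (Set.ncard_le_card _).trans_eq Nat.card_eq_fintype_card

lemma delta2_le {d : ℕ} (h : ∀ u v, G.Adj u v → min (deg G u) (deg G v) ≤ d) :
    delta2 G ≤ d :=
  csSup_le' <| by rintro _ ⟨u, v, huv, rfl⟩; exact h u v huv

lemma le_delta2 {u v : V} (huv : G.Adj u v) : min (deg G u) (deg G v) ≤ delta2 G :=
  le_csSup ⟨Fintype.card V, by
      rintro _ ⟨u, v, -, rfl⟩
      exact (min_le_left _ _).trans (deg_le_card u)⟩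
    ⟨u, v, huv, rfl⟩

lemma lt_chromNum_of_not_colorable {k : ℕ} (h : ¬G.Colorable k) : k < chromNum G := by
  have hmem : G.Colorable (chromNum G) :=
    Nat.sInf_mem (s := {n | G.Colorable n}) ⟨_, G.colorable_of_fintype⟩
  by_contra! hle
  exact h (hmem.mono hle)

lemma SimpleGraph.IsClique.ncard_le_deg {s : Set V} {v : V} (hs : G.IsClique s) (hv : v ∈ s)
    (hN : ¬G.IsClique (G.neighborSet v)) : s.ncard ≤ deg G v := by
  have hsub : s \ {v} ⊂ G.neighborSet v :=
    ⟨fun w hw ↦ hs hv hw.1 (Ne.symm hw.2),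
      fun hN' ↦ hN (hs.subset (hN'.trans Set.sdiff_subset))⟩
  calc s.ncard = (s \ {v}).ncard + 1 := (Set.ncard_sdiff_singleton_add_one hv).symm
    _ ≤ deg G v := Set.ncard_lt_ncard hsub

namespace SimpleGraph.Iso

variable {W : Type*} [Fintype W] {G' : SimpleGraph W}

lemma deg_eq (f : G ≃g G') (v : V) : deg G' (f v) = deg G v := by
  simp only [deg, ← Nat.card_coe_set_eq]
  exact Nat.card_congr (f.mapNeighborSet v).symm

lemma delta2_le (f : G ≃g G') : delta2 G ≤ delta2 G' :=
  _root_.delta2_le fun u v huv ↦ by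
    simpa only [f.deg_eq] using le_delta2 (f.map_adj_iff.2 huv)

lemma delta2_eq (f : G ≃g G') : delta2 G = delta2 G' :=
  le_antisymm f.delta2_le f.symm.delta2_le

lemma chromNum_eq (f : G ≃g G') : chromNum G = chromNum G' := by
  simp only [chromNum, colorable_congr f]

lemma cliqueNum_eq (f : G ≃g G') : G.cliqueNum = G'.cliqueNum :=
  le_antisymm (cliqueNum_le_of_embedding f.toEmbedding)
    (cliqueNum_le_of_embedding f.symm.toEmbedding)

end SimpleGraph.Iso

end Invariants

section SumCard

variable {α β : Type*}

lemma Set.ncard_inl_image_compl_singleton [Finite α] (i : α) :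
    (Sum.inl '' ({i}ᶜ : Set α) : Set (α ⊕ β)).ncard = Nat.card α - 1 := by
  rw [Set.ncard_image_of_injective _ Sum.inl_injective, Set.ncard_compl, Set.ncard_singleton]

lemma Set.ncard_insert_inl_inr_image_compl_singleton [Finite β] (h : α) (c : β) :
    (insert (Sum.inl h) (Sum.inr '' ({c}ᶜ : Set β))).ncard = Nat.card β := by
  have hpos : 0 < Nat.card β := Nat.card_pos_iff.2 ⟨⟨c⟩, inferInstance⟩
  rw [Set.ncard_insert_of_notMem (by simp), Set.ncard_image_of_injective _ Sum.inr_injective,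
    Set.ncard_compl, Set.ncard_singleton, Nat.sub_add_cancel hpos]

lemma Set.ncard_range_inr : (Set.range (Sum.inr : β → α ⊕ β)).ncard = Nat.card β := by
  rw [← Set.image_univ, Set.ncard_image_of_injective _ Sum.inr_injective, Set.ncard_univ]

end SumCard

namespace Fn

open Sum

variable {n : ℕ}

@[simp] lemma adj_inl_inl {i j : Fin n} :
    (Fn n).Adj (inl i) (inl j) ↔
      i ≠ j ∧ ¬((i : ℕ) = 0 ∧ (j : ℕ) = 1) ∧ ¬((i : ℕ) = 1 ∧ (j : ℕ) = 0) := by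
  simp only [Fn, fromRel_adj, FnRel, ne_eq, inl.injEq]
  tauto

@[simp] lemma adj_inr_inr {a b : Fin (n - 1)} : (Fn n).Adj (inr a) (inr b) ↔ a ≠ b := by
  simp [Fn, FnRel]

@[simp] lemma adj_inl_inr {i : Fin n} {a : Fin (n - 1)} :
    (Fn n).Adj (inl i) (inr a) ↔
      (i : ℕ) = 0 ∧ (a : ℕ) < (n - 1) / 2 ∨
        (i : ℕ) = 1 ∧ (n - 1) / 2 ≤ (a : ℕ) := by
  simp [Fn, FnRel]

@[simp] lemma adj_inr_inl {i : Fin n} {a : Fin (n - 1)} :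
    (Fn n).Adj (inr a) (inl i) ↔
      (i : ℕ) = 0 ∧ (a : ℕ) < (n - 1) / 2 ∨
        (i : ℕ) = 1 ∧ (n - 1) / 2 ≤ (a : ℕ) := by
  rw [adj_comm, adj_inl_inr]

lemma neighborSet_inl {i : Fin n} (hi : 2 ≤ (i : ℕ)) :
    (Fn n).neighborSet (inl i) = inl '' {i}ᶜ := by
  ext (j | a) <;> simp [inl_injective.mem_set_image, Fin.ext_iff] <;> omega

lemma exists_neighborSet_inr (a : Fin (n - 1)) :
    ∃ h : Fin n, (Fn n).neighborSet (inr a) = insert (inl h) (inr '' {a}ᶜ) := by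
  have := a.isLt
  refine ⟨⟨if (a : ℕ) < (n - 1) / 2 then 0 else 1, by split_ifs <;> omega⟩, ?_⟩
  ext (j | b) <;> simp [inr_injective.mem_set_image, Fin.ext_iff] <;> (try split_ifs) <;> omega

lemma deg_inl {i : Fin n} (hi : 2 ≤ (i : ℕ)) : deg (Fn n) (inl i) = n - 1 := by
  rw [deg, neighborSet_inl hi, Set.ncard_inl_image_compl_singleton, Nat.card_fin]

lemma deg_inr (a : Fin (n - 1)) : deg (Fn n) (inr a) = n - 1 := by
  obtain ⟨h, hN⟩ := exists_neighborSet_inr a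
  rw [deg, hN, Set.ncard_insert_inl_inr_image_compl_singleton, Nat.card_fin]

lemma delta2_eq (hn : 3 ≤ n) : delta2 (Fn n) = n - 1 := by
  refine le_antisymm (delta2_le ?_) ?_
  · rintro (i | a) (j | b) huv
    · rw [adj_inl_inl] at huv
      rcases (by omega : 2 ≤ (i : ℕ) ∨ 2 ≤ (j : ℕ)) with hi | hj
      · exact (min_le_left _ _).trans (deg_inl hi).le
      · exact (min_le_right _ _).trans (deg_inl hj).le
    · exact (min_le_right _ _).trans (deg_inr b).le
    · exact (min_le_left _ _).trans (deg_inr a).le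
    · exact (min_le_left _ _).trans (deg_inr a).le
  · have hedge : (Fn n).Adj (inr ⟨0, by omega⟩) (inr ⟨1, by omega⟩) := by simp
    simpa only [deg_inr, min_self] using le_delta2 hedge

lemma isClique_inl_image_compl {h : Fin n} (hh : (h : ℕ) ≤ 1) :
    (Fn n).IsClique (inl '' {h}ᶜ) := by
  rintro _ ⟨i, hi, rfl⟩ _ ⟨j, hj, rfl⟩ hij
  simp only [Set.mem_compl_iff, Set.mem_singleton_iff, Fin.ext_iff, ne_eq, inl.injEq] at hi hj hij
  simp only [adj_inl_inl, ne_eq, Fin.ext_iff]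
  omega

lemma isClique_range_inr : (Fn n).IsClique (Set.range inr) := by
  rintro _ ⟨a, rfl⟩ _ ⟨b, rfl⟩ hab
  simpa using hab

lemma not_colorable (hn : 2 ≤ n) : ¬(Fn n).Colorable (n - 1) := by
  rintro ⟨C⟩
  obtain ⟨x, hx⟩ : ∃ x : Fin n, (x : ℕ) = 0 := ⟨⟨0, by omega⟩, rfl⟩
  have hcard : Nat.card (Fin (n - 1)) = n - 1 := Nat.card_fin _
  obtain ⟨_, ⟨y, hyx, rfl⟩, hCy⟩ := C.exists_mem_eq_of_isClique
    (isClique_inl_image_compl (h := x) (by omega))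
    (by rw [hcard, Set.ncard_inl_image_compl_singleton x, Nat.card_fin]) (C (inl x))
  have hy : (y : ℕ) = 1 := by
    by_contra hne
    refine C.valid ?_ hCy.symm
    simp only [Set.mem_compl_iff, Set.mem_singleton_iff, Fin.ext_iff] at hyx
    simp only [adj_inl_inl, ne_eq, Fin.ext_iff]
    omega
  obtain ⟨_, ⟨a, rfl⟩, hCa⟩ := C.exists_mem_eq_of_isClique isClique_range_inr
    (by rw [hcard, Set.ncard_range_inr, Nat.card_fin]) (C (inl x))
  by_cases ha : (a : ℕ) < (n - 1) / 2
  · exact C.valid (adj_inr_inl.2 (Or.inl ⟨hx, ha⟩)) hCa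
  · exact C.valid (adj_inr_inl.2 (Or.inr ⟨hy, not_lt.1 ha⟩)) (hCa.trans hCy.symm)

lemma not_isClique_neighborSet_inl {i : Fin n} (hi : 2 ≤ (i : ℕ)) :
    ¬(Fn n).IsClique ((Fn n).neighborSet (inl i)) := fun hcl ↦ by
  have hxy := hcl (x := inl ⟨0, by omega⟩) (y := inl ⟨1, by omega⟩)
  simp [Fin.ext_iff] at hxy
  omega

lemma not_isClique_neighborSet_inr (hn : 3 ≤ n) (a : Fin (n - 1)) :
    ¬(Fn n).IsClique ((Fn n).neighborSet (inr a)) := fun hcl ↦ by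
  have := a.isLt
  by_cases ha : (a : ℕ) < (n - 1) / 2
  · have hxb := hcl (x := inl ⟨0, by omega⟩) (y := inr ⟨n - 2, by omega⟩)
    simp [Fin.ext_iff, ha] at hxb
    omega
  · have hyb := hcl (x := inl ⟨1, by omega⟩) (y := inr ⟨0, by omega⟩)
    simp [Fin.ext_iff] at hyb
    omega

lemma cliqueNum_le (hn : 3 ≤ n) : (Fn n).cliqueNum ≤ n - 1 := by
  refine cliqueNum_le_of_forall_isClique fun s hs ↦ ?_
  by_cases hinl : ∃ i : Fin n, 2 ≤ (i : ℕ) ∧ inl i ∈ s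
  · obtain ⟨i, hi, his⟩ := hinl
    exact (hs.ncard_le_deg his (not_isClique_neighborSet_inl hi)).trans_eq (deg_inl hi)
  by_cases hinr : ∃ a, inr a ∈ s
  · obtain ⟨a, has⟩ := hinr
    exact (hs.ncard_le_deg has (not_isClique_neighborSet_inr hn a)).trans_eq (deg_inr a)
  -- otherwise `s ⊆ {x, y}`, and `x`, `y` are not adjacent
  have hleft : ∀ i : Fin n, inl i ∈ s → (i : ℕ) < 2 := fun i hi ↦ by
    by_contra! h
    exact hinl ⟨i, h, hi⟩
  refine ((Set.ncard_le_one (Set.toFinite s)).mpr ?_).trans (by omega)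
  rintro (i | a) hi (j | b) hj
  · by_contra hne
    have hadj := hs hi hj hne
    have := hleft i hi
    have := hleft j hj
    simp only [adj_inl_inl, ne_eq, Fin.ext_iff] at hadj
    omega
  all_goals exact absurd ⟨_, ‹inr _ ∈ s›⟩ hinr

end Fn

theorem stmt14 (t : ℕ) :
    ∃ (n : ℕ) (G : SimpleGraph (Fin n)),
      t ≤ delta2 G ∧ max (G.cliqueNum) (delta2 G) < chromNum G := by
  have hΔ : delta2 (Fn (t + 3)) = t + 3 - 1 := Fn.delta2_eq (by omega)
  have hω : (Fn (t + 3)).cliqueNum ≤ t + 3 - 1 := Fn.cliqueNum_le (by omega)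
  have hχ : t + 3 - 1 < chromNum (Fn (t + 3)) :=
    lt_chromNum_of_not_colorable (Fn.not_colorable (by omega))
  obtain ⟨G, ⟨e⟩⟩ : ∃ G : SimpleGraph (Fin _), Nonempty (Fn (t + 3) ≃g G) :=
    ⟨_, ⟨Iso.map finSumFinEquiv _⟩⟩
  refine ⟨_, G, ?_, ?_⟩
  · rw [← e.delta2_eq]
    omega
  · rw [← e.delta2_eq, ← e.cliqueNum_eq, ← e.chromNum_eq]
    omega
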